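/- arXiv:2007.11631 — 3 statements merged into one kernel-verified Lean document; each statement's English description precedes it below -/
import Mathlib

section
/- Let ρ be a positive integer, r an integer, and set s = ρ+r. In ℚ[[v]] let u be the unique power series with constant term 1 satisfying u^{ρ²} = (1+v)^{r²−ρ²}, and set w(v) = v·u. In ℚ[[t]] let u′ be the unique power series with constant term 1 satisfying (u′)^{ρ} = (1+(1−s/ρ)t)^{ρ−s}, and set z(t) = t·u′ and v(t) = t·(1−(r/ρ)t)^{−1}. Let G ∈ ℚ[[w]] be the unique power series with G(w(v)) = 1+v in ℚ[[v]], and let P ∈ ℚ[[z]] be the unique power series with P(z(t)) = (1+(1−s/ρ)t)^{−1}·(1+(2−s/ρ)t) in ℚ[[t]]. Then G(w(v(t))) = P(z(t)) as elements of ℚ[[t]]. -/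
/-!
Since `G(w(v)) = 1 + v`, associativity of substitution gives `G(w(v(t))) = 1 + v(t)`, and
`1 + t/(1 - at) = (1 + (1 - a)t)/(1 - at)` with `a = r/ρ`; as `1 - s/ρ = -a` and
`2 - s/ρ = 1 - a`, this is the prescribed value of `P(z(t))`.
-/

open PowerSeries

/-- Composition (substitution) `f(g)` of formal power series, correct whenever the
constant term of `g` vanishes. -/
noncomputable def comp (f g : ℚ⟦X⟧) : ℚ⟦X⟧ :=
  PowerSeries.mk fun n => ∑ k ∈ Finset.range (n + 1), coeff k f * coeff n (g ^ k)

/-- Integer power of a formal power series (using the formal inverse for negative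
exponents). -/
noncomputable def zp (f : ℚ⟦X⟧) (n : ℤ) : ℚ⟦X⟧ :=
  f ^ n.toNat * f⁻¹ ^ (-n).toNat

/-- `g ^ k` vanishes below degree `k`, so the truncated sum defining `comp` is the full
substitution sum. -/
theorem comp_eq_subst {g : ℚ⟦X⟧} (hg : constantCoeff g = 0) (f : ℚ⟦X⟧) :
    comp f g = f.subst g := by
  ext n
  rw [comp, coeff_mk, coeff_subst' (HasSubst.of_constantCoeff_zero' hg)]
  refine (finsum_eq_sum_of_support_subset _ fun k hk => ?_).symm
  rw [Finset.coe_range, Set.mem_Iio, Nat.lt_succ_iff]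
  by_contra! hnk
  have hgk : (n : ℕ∞) < (g ^ k).order :=
    (Nat.cast_lt.mpr hnk).trans_le (le_order_pow_of_constantCoeff_eq_zero k hg)
  exact hk (mul_eq_zero_of_right _ (coeff_of_lt_order n hgk))

theorem comp_assoc {g h : ℚ⟦X⟧} (hg : constantCoeff g = 0) (hh : constantCoeff h = 0)
    (f : ℚ⟦X⟧) : comp (comp f g) h = comp f (comp g h) := by
  have hgh : constantCoeff (g.subst h) = 0 := constantCoeff_subst_eq_zero hh g hg
  rw [comp_eq_subst hg, comp_eq_subst hh, comp_eq_subst hh, comp_eq_subst hgh,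
    subst_comp_subst_apply (HasSubst.of_constantCoeff_zero' hg)
      (HasSubst.of_constantCoeff_zero' hh)]

theorem comp_one_add_X {h : ℚ⟦X⟧} (hh : constantCoeff h = 0) : comp (1 + X) h = 1 + h := by
  have hsubst := HasSubst.of_constantCoeff_zero' hh
  rw [comp_eq_subst hh, ← coe_substAlgHom hsubst, map_add, map_one, substAlgHom_X]

theorem one_add_X_mul_inv {k : Type*} [Field k] (a : k) :
    1 + X * (1 - C a * X)⁻¹ = (1 - C a * X)⁻¹ * (1 + C (1 - a) * X) := by
  have hA : constantCoeff (1 - C a * X : k⟦X⟧) ≠ 0 := by simp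
  have hAinv := PowerSeries.mul_inv_cancel _ hA
  refine mul_left_cancel₀ (ne_zero_of_map hA) ?_
  rw [← mul_assoc, hAinv, one_mul, mul_add, mul_one, mul_left_comm, hAinv, map_sub, map_one]
  ring

theorem virtual_segre_verlinde_g_general (ρ : ℕ) (hρ : 0 < ρ) (r s : ℤ) (hs : s = ρ + r)
    (u u' vt : ℚ⟦X⟧)
    (hvt : vt = X * (1 - C ((r : ℚ) / (ρ : ℚ)) * X)⁻¹)
    (G P : ℚ⟦X⟧)
    (hG : comp G (X * u) = 1 + X)
    (hP : comp P (X * u') =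
      (1 + C (1 - (s : ℚ) / (ρ : ℚ)) * X)⁻¹ * (1 + C (2 - (s : ℚ) / (ρ : ℚ)) * X)) :
    comp G (comp (X * u) vt) = comp P (X * u') := by
  have hρ' : (ρ : ℚ) ≠ 0 := by exact_mod_cast hρ.ne'
  have hs₁ : 1 - (s : ℚ) / ρ = -(r / ρ) := by rw [hs]; push_cast; field_simp; ring
  have hs₂ : 2 - (s : ℚ) / ρ = 1 - r / ρ := by rw [hs]; push_cast; field_simp; ring
  have hvt0 : constantCoeff vt = 0 := by simp [hvt]
  rw [← comp_assoc (by simp) hvt0, hG, comp_one_add_X hvt0, hP, hvt, hs₁, hs₂, map_neg, neg_mul,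
    ← sub_eq_add_neg, one_add_X_mul_inv]

/-- Rank-ρ virtual Segre–Verlinde correspondence `G(w(v(t))) = P(z(t))`, where
`G = g_{r/ρ}` and `P = V_s·W_s²`, under the formal variable changes
`w = v(1+v)^{r²/ρ²-1}`, `z = t(1+(1-s/ρ)t)^{1-s/ρ}`, `v = t(1-(r/ρ)t)⁻¹`, `s = ρ+r`. -/
theorem virtual_segre_verlinde_g (ρ : ℕ) (hρ : 0 < ρ) (r s : ℤ) (hs : s = ρ + r)
    (u u' vt : ℚ⟦X⟧)
    (hu0 : constantCoeff u = 1)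
    (hu : u ^ (ρ ^ 2) = zp (1 + X) (r ^ 2 - (ρ : ℤ) ^ 2))
    (hu'0 : constantCoeff u' = 1)
    (hu' : u' ^ ρ = zp (1 + C (1 - (s : ℚ) / (ρ : ℚ)) * X) ((ρ : ℤ) - s))
    (hvt : vt = X * (1 - C ((r : ℚ) / (ρ : ℚ)) * X)⁻¹)
    (G P : ℚ⟦X⟧)
    (hG : comp G (X * u) = 1 + X)
    (hP : comp P (X * u') =
      (1 + C (1 - (s : ℚ) / (ρ : ℚ)) * X)⁻¹ * (1 + C (2 - (s : ℚ) / (ρ : ℚ)) * X)) :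
    comp G (comp (X * u) vt) = comp P (X * u') :=
  virtual_segre_verlinde_g_general ρ hρ r s hs u u' vt hvt G P hG hP
end

section
/- Let K be a field of characteristic zero with two ring automorphisms σ and τ, and suppose ω, i ∈ K satisfy ω² = 2, i² = −1, σ(ω) = −ω, σ(i) = i, τ(ω) = ω, τ(i) = −i. Extend σ and τ coefficientwise to K[[q]]. Suppose given, indexed by the subsets J ⊆ {1,2,3}, units Y_J, Z_J ∈ K[[q]] and power series S_J ∈ K[[q]] with zero constant term, such that for each of the three families L ∈ {Y, Z, S}: σ interchanges L_∅ ↔ L_{{1,3}} and L_{{2}} ↔ L_{{1,2,3}} and fixes L_{{1}}, L_{{3}}, L_{{1,2}}, L_{{2,3}}, while τ interchanges L_{{1}} ↔ L_{{3}} and L_{{1,2}} ↔ L_{{2,3}} and fixes L_∅, L_{{2}}, L_{{1,3}}, L_{{1,2,3}}. Then for all integers χ, d, e, k, l, the power series Φ₀ = Σ_{J ⊆ {1,2,3}} (−1)^{|J|·χ} · i^{(Σ_{j∈J} j)·d} · Y_J^{e} · Z_J^{k} · exp(l·S_J) ∈ K[[q]] satisfies σ(Φ₀) = Φ₀ and τ(Φ₀)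 = Φ₀. In particular, if every element of K fixed by both σ and τ lies in the prime field ℚ, then all coefficients of Φ₀ are rational. -/
/-!
The automorphisms act on the index sets `J ⊆ {1,2,3}` by involutions: `σ` toggles `1` and `3`
in the sets of even weight `‖J‖ = ∑ j ∈ J, j` and `τ` is the reflection `j ↦ 4 - j`. The
hypotheses say that the universal series are permuted accordingly. Both involutions preserve
`|J|` mod 2; `σ` fixes `i` and preserves `‖J‖` mod 4, while `τ` sends `i` to `-i = i³` and
multiplies `‖J‖` by 3 mod 4. As `i⁴ = 1`, each automorphism therefore carries the `J`-summand
of `Φ₀` to the summand indexed by the image of `J`, and reindexing the sum shows that `Φ₀` is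
fixed.
-/

open PowerSeries

/-- Composition (substitution) `f(g)` of formal power series, correct whenever the
constant term of `g` vanishes. -/
noncomputable def pcomp {K : Type*} [CommRing K] (f g : PowerSeries K) : PowerSeries K :=
  PowerSeries.mk fun n => ∑ k ∈ Finset.range (n + 1), coeff k f * coeff n (g ^ k)

noncomputable def pexp {K : Type*} [Field K] [CharZero K] (g : PowerSeries K) :
    PowerSeries K :=
  pcomp (PowerSeries.exp K) g

section

variable {K L : Type*} [Field K] [Field L]

lemma zpow_eq_zpow_of_modEq {G₀ : Type*} [GroupWithZero G₀] {x : G₀} {n : ℕ} (hx : x ^ n = 1)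
    {a b : ℤ} (h : a ≡ b [ZMOD n]) : x ^ a = x ^ b := by
  rcases eq_or_ne x 0 with rfl | hx0
  · obtain rfl : n = 0 := by
      by_contra hn
      simp [zero_pow hn] at hx
    rw [Int.ModEq, Nat.cast_zero, Int.emod_zero, Int.emod_zero] at h
    rw [h]
  · lift x to G₀ˣ using hx0.isUnit
    norm_cast at hx ⊢
    rw [zpow_eq_zpow_emod' a hx, h, ← zpow_eq_zpow_emod' b hx]

lemma map_neg_one_zpow_mul_zpow (φ : K →+* K) {ε : K} (hε : ε ^ 4 = 1) {r : ℕ}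
    (hφ : φ ε = ε ^ r) {a a' b b' : ℤ} (ha : a' ≡ a [ZMOD 2]) (hb : b' ≡ r * b [ZMOD 4])
    (χ d : ℤ) :
    φ ((-1) ^ (a * χ) * ε ^ (b * d)) = (-1) ^ (a' * χ) * ε ^ (b' * d) := by
  rw [map_mul, map_zpow₀, map_zpow₀, map_neg, map_one, hφ, ← zpow_natCast, ← zpow_mul,
    ← mul_assoc]
  congr 1
  · exact zpow_eq_zpow_of_modEq (n := 2) neg_one_sq (ha.mul_right χ).symm
  · exact zpow_eq_zpow_of_modEq hε (hb.mul_right d).symm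

lemma exists_ratCast_coeff_of_map_eq_self {σ τ : K ≃+* K}
    (hfix : ∀ x : K, σ x = x → τ x = x → ∃ a : ℚ, x = (a : K)) {f : PowerSeries K}
    (hσ : map (σ : K →+* K) f = f) (hτ : map (τ : K →+* K) f = f) (n : ℕ) :
    ∃ a : ℚ, coeff n f = (a : K) :=
  hfix _ (by simpa using congrArg (coeff n) hσ) (by simpa using congrArg (coeff n) hτ)

variable [CharZero K] [CharZero L]

lemma map_pexp (φ : K →+* L) (g : PowerSeries K) : map φ (pexp g) = pexp (map φ g) := by
  ext n
  simp only [pexp, pcomp, ← map_pow, coeff_map, coeff_mk, map_sum, map_mul, coeff_exp,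
    RingHom.map_rat_algebraMap]

lemma map_C_mul_zpow_mul_zpow_mul_pexp (φ : K →+* L) {c : K} {c' : L}
    {u v : (PowerSeries K)ˣ} {u' v' : (PowerSeries L)ˣ} {s : PowerSeries K}
    {s' : PowerSeries L} (hc : φ c = c') (hu : map φ (u : PowerSeries K) = u')
    (hv : map φ (v : PowerSeries K) = v') (hs : map φ s = s') (e k l : ℤ) :
    map φ (C c * ((u ^ e : (PowerSeries K)ˣ) : PowerSeries K) *
      ((v ^ k : (PowerSeries K)ˣ) : PowerSeries K) * pexp (l • s)) =
    C c' * ((u' ^ e : (PowerSeries L)ˣ) : PowerSeries L) *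
      ((v' ^ k : (PowerSeries L)ˣ) : PowerSeries L) * pexp (l • s') := by
  have hu' : Units.map (map φ).toMonoidHom u = u' := Units.ext hu
  have hv' : Units.map (map φ).toMonoidHom v = v' := Units.ext hv
  simp only [map_mul, map_C, hc, map_pexp, map_zsmul, hs, ← hu', ← hv', ← map_zpow,
    Units.coe_map]
  rfl

end

/-- The universal `J`-sum `Φ₀ = Σ_{J ⊆ {1,2,3}} (-1)^{|J|χ} i^{‖J‖d} Y_J^e Z_J^k exp(l·S_J)`
of the rank-4 virtual Segre formula. -/
noncomputable def Phi4 {K : Type*} [Field K] [CharZero K] (ε : K)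
    (Y Z : Finset ℕ → (PowerSeries K)ˣ) (S : Finset ℕ → PowerSeries K)
    (χ d e k l : ℤ) : PowerSeries K :=
  ∑ J ∈ ({1, 2, 3} : Finset ℕ).powerset,
    C ((-1 : K) ^ ((J.card : ℤ) * χ) * ε ^ (((J.sum id : ℕ) : ℤ) * d)) *
      ((Y J ^ e : (PowerSeries K)ˣ) : PowerSeries K) *
      ((Z J ^ k : (PowerSeries K)ˣ) : PowerSeries K) *
      pexp (l • S J)

-- These are the conditions under which an automorphism with `ε ↦ ε ^ r`, `ε ^ 4 = 1`, carries
-- the coefficient of the `J`-summand of `Phi4 ε` to that of the `π J`-summand.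
def IsAdmissibleInvolution (r : ℕ) (π : Finset ℕ → Finset ℕ) : Prop :=
  ∀ J ∈ ({1, 2, 3} : Finset ℕ).powerset,
    π J ∈ ({1, 2, 3} : Finset ℕ).powerset ∧ π (π J) = J ∧
    ((π J).card : ℤ) ≡ J.card [ZMOD 2] ∧
    (((π J).sum id : ℕ) : ℤ) ≡ r * ((J.sum id : ℕ) : ℤ) [ZMOD 4]

theorem map_Phi4_eq_self {K : Type*} [Field K] [CharZero K] (φ : K →+* K) {ε : K} (hε : ε ^ 4 = 1) {r : ℕ} (hφ : φ ε = ε ^ r)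
    {π : Finset ℕ → Finset ℕ} (hπ : IsAdmissibleInvolution r π)
    {Y Z : Finset ℕ → (PowerSeries K)ˣ} {S : Finset ℕ → PowerSeries K}
    (hY : ∀ J ∈ ({1, 2, 3} : Finset ℕ).powerset, map φ (Y J : PowerSeries K) = Y (π J))
    (hZ : ∀ J ∈ ({1, 2, 3} : Finset ℕ).powerset, map φ (Z J : PowerSeries K) = Z (π J))
    (hS : ∀ J ∈ ({1, 2, 3} : Finset ℕ).powerset, map φ (S J) = S (π J)) (χ d e k l : ℤ) :
    map φ (Phi4 ε Y Z S χ d e k l) = Phi4 ε Y Z S χ d e k l := by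
  rw [Phi4, map_sum]
  refine Finset.sum_nbij' π π (fun J hJ ↦ (hπ J hJ).1) (fun J hJ ↦ (hπ J hJ).1)
    (fun J hJ ↦ (hπ J hJ).2.1) (fun J hJ ↦ (hπ J hJ).2.1) fun J hJ ↦ ?_
  obtain ⟨-, -, hcard, hweight⟩ := hπ J hJ
  exact map_C_mul_zpow_mul_zpow_mul_pexp φ
    (map_neg_one_zpow_mul_zpow φ hε hφ hcard hweight χ d) (hY J hJ) (hZ J hJ) (hS J hJ) e k l

-- On the sets of even weight, which are those with `1 ∈ J ↔ 3 ∈ J`, this is `J ∆ {1, 3}`.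
def sigmaPerm (J : Finset ℕ) : Finset ℕ :=
  if Even (J.sum id) then ({1, 2, 3} : Finset ℕ).filter (fun j ↦ j ∈ J ↔ j = 2) else J

def tauPerm (J : Finset ℕ) : Finset ℕ :=
  ({1, 2, 3} : Finset ℕ).filter (fun j ↦ 4 - j ∈ J)

lemma isAdmissibleInvolution_sigmaPerm : IsAdmissibleInvolution 1 sigmaPerm := by
  unfold IsAdmissibleInvolution
  decide

lemma isAdmissibleInvolution_tauPerm : IsAdmissibleInvolution 3 tauPerm := by
  unfold IsAdmissibleInvolution
  decide

lemma mem_powerset_one_two_three {J : Finset ℕ} (hJ : J ∈ ({1, 2, 3} : Finset ℕ).powerset) :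
    J = ∅ ∨ J = {1} ∨ J = {2} ∨ J = {3} ∨ J = {1, 2} ∨ J = {1, 3} ∨ J = {2, 3} ∨
      J = {1, 2, 3} := by
  revert J
  decide

section

variable {A : Type*} (f : A → A) (F : Finset ℕ → A)

-- The case analysis closes by `exact`: `sigmaPerm` and `tauPerm` evaluate definitionally
-- to the literal sets, listed in increasing order.
lemma forall_mem_powerset_apply_eq_sigmaPerm (h0 : f (F ∅) = F {1, 3})
    (h13 : f (F {1, 3}) = F ∅) (h2 : f (F {2}) = F {1, 2, 3}) (h123 : f (F {1, 2, 3}) = F {2})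
    (h1 : f (F {1}) = F {1}) (h3 : f (F {3}) = F {3}) (h12 : f (F {1, 2}) = F {1, 2})
    (h23 : f (F {2, 3}) = F {2, 3}) :
    ∀ J ∈ ({1, 2, 3} : Finset ℕ).powerset, f (F J) = F (sigmaPerm J) := by
  intro J hJ
  obtain rfl | rfl | rfl | rfl | rfl | rfl | rfl | rfl := mem_powerset_one_two_three hJ
  exacts [h0, h1, h2, h3, h12, h13, h23, h123]

lemma forall_mem_powerset_apply_eq_tauPerm (h1 : f (F {1}) = F {3}) (h3 : f (F {3}) = F {1})
    (h12 : f (F {1, 2}) = F {2, 3}) (h23 : f (F {2, 3}) = F {1, 2}) (h0 : f (F ∅) = F ∅)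
    (h2 : f (F {2}) = F {2}) (h13 : f (F {1, 3}) = F {1, 3})
    (h123 : f (F {1, 2, 3}) = F {1, 2, 3}) :
    ∀ J ∈ ({1, 2, 3} : Finset ℕ).powerset, f (F J) = F (tauPerm J) := by
  intro J hJ
  obtain rfl | rfl | rfl | rfl | rfl | rfl | rfl | rfl := mem_powerset_one_two_three hJ
  exacts [h0, h1, h2, h3, h12, h13, h23, h123]

end

theorem rank_four_galois_invariance_general {K : Type*} [Field K] [CharZero K]
    (σ τ : K ≃+* K) (i : K)
    (hi : i ^ 2 = -1)
    (hσi : σ i = i) (hτi : τ i = -i)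
    (Y Z : Finset ℕ → (PowerSeries K)ˣ) (S : Finset ℕ → PowerSeries K)
    (hYσ₁ : map (σ : K →+* K) (Y ∅ : PowerSeries K) = Y {1, 3})
    (hYσ₂ : map (σ : K →+* K) (Y {1, 3} : PowerSeries K) = Y ∅)
    (hYσ₃ : map (σ : K →+* K) (Y {2} : PowerSeries K) = Y {1, 2, 3})
    (hYσ₄ : map (σ : K →+* K) (Y {1, 2, 3} : PowerSeries K) = Y {2})
    (hYσ₅ : map (σ : K →+* K) (Y {1} : PowerSeries K) = Y {1})
    (hYσ₆ : map (σ : K →+* K) (Y {3} : PowerSeries K) = Y {3})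
    (hYσ₇ : map (σ : K →+* K) (Y {1, 2} : PowerSeries K) = Y {1, 2})
    (hYσ₈ : map (σ : K →+* K) (Y {2, 3} : PowerSeries K) = Y {2, 3})
    (hYτ₁ : map (τ : K →+* K) (Y {1} : PowerSeries K) = Y {3})
    (hYτ₂ : map (τ : K →+* K) (Y {3} : PowerSeries K) = Y {1})
    (hYτ₃ : map (τ : K →+* K) (Y {1, 2} : PowerSeries K) = Y {2, 3})
    (hYτ₄ : map (τ : K →+* K) (Y {2, 3} : PowerSeries K) = Y {1, 2})
    (hYτ₅ : map (τ : K →+* K) (Y ∅ : PowerSeries K) = Y ∅)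
    (hYτ₆ : map (τ : K →+* K) (Y {2} : PowerSeries K) = Y {2})
    (hYτ₇ : map (τ : K →+* K) (Y {1, 3} : PowerSeries K) = Y {1, 3})
    (hYτ₈ : map (τ : K →+* K) (Y {1, 2, 3} : PowerSeries K) = Y {1, 2, 3})
    (hZσ₁ : map (σ : K →+* K) (Z ∅ : PowerSeries K) = Z {1, 3})
    (hZσ₂ : map (σ : K →+* K) (Z {1, 3} : PowerSeries K) = Z ∅)
    (hZσ₃ : map (σ : K →+* K) (Z {2} : PowerSeries K) = Z {1, 2, 3})
    (hZσ₄ : map (σ : K →+* K) (Z {1, 2, 3} : PowerSeries K) = Z {2})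
    (hZσ₅ : map (σ : K →+* K) (Z {1} : PowerSeries K) = Z {1})
    (hZσ₆ : map (σ : K →+* K) (Z {3} : PowerSeries K) = Z {3})
    (hZσ₇ : map (σ : K →+* K) (Z {1, 2} : PowerSeries K) = Z {1, 2})
    (hZσ₈ : map (σ : K →+* K) (Z {2, 3} : PowerSeries K) = Z {2, 3})
    (hZτ₁ : map (τ : K →+* K) (Z {1} : PowerSeries K) = Z {3})
    (hZτ₂ : map (τ : K →+* K) (Z {3} : PowerSeries K) = Z {1})
    (hZτ₃ : map (τ : K →+* K) (Z {1, 2} : PowerSeries K) = Z {2, 3})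
    (hZτ₄ : map (τ : K →+* K) (Z {2, 3} : PowerSeries K) = Z {1, 2})
    (hZτ₅ : map (τ : K →+* K) (Z ∅ : PowerSeries K) = Z ∅)
    (hZτ₆ : map (τ : K →+* K) (Z {2} : PowerSeries K) = Z {2})
    (hZτ₇ : map (τ : K →+* K) (Z {1, 3} : PowerSeries K) = Z {1, 3})
    (hZτ₈ : map (τ : K →+* K) (Z {1, 2, 3} : PowerSeries K) = Z {1, 2, 3})
    (hSσ₁ : map (σ : K →+* K) (S ∅) = S {1, 3})
    (hSσ₂ : map (σ : K →+* K) (S {1, 3}) = S ∅)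
    (hSσ₃ : map (σ : K →+* K) (S {2}) = S {1, 2, 3})
    (hSσ₄ : map (σ : K →+* K) (S {1, 2, 3}) = S {2})
    (hSσ₅ : map (σ : K →+* K) (S {1}) = S {1})
    (hSσ₆ : map (σ : K →+* K) (S {3}) = S {3})
    (hSσ₇ : map (σ : K →+* K) (S {1, 2}) = S {1, 2})
    (hSσ₈ : map (σ : K →+* K) (S {2, 3}) = S {2, 3})
    (hSτ₁ : map (τ : K →+* K) (S {1}) = S {3})
    (hSτ₂ : map (τ : K →+* K) (S {3}) = S {1})
    (hSτ₃ : map (τ : K →+* K) (S {1, 2}) = S {2, 3})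
    (hSτ₄ : map (τ : K →+* K) (S {2, 3}) = S {1, 2})
    (hSτ₅ : map (τ : K →+* K) (S ∅) = S ∅)
    (hSτ₆ : map (τ : K →+* K) (S {2}) = S {2})
    (hSτ₇ : map (τ : K →+* K) (S {1, 3}) = S {1, 3})
    (hSτ₈ : map (τ : K →+* K) (S {1, 2, 3}) = S {1, 2, 3})
    (χ d e k l : ℤ) :
    map (σ : K →+* K) (Phi4 i Y Z S χ d e k l) = Phi4 i Y Z S χ d e k l ∧
    map (τ : K →+* K) (Phi4 i Y Z S χ d e k l) = Phi4 i Y Z S χ d e k l ∧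
    ((∀ x : K, σ x = x → τ x = x → ∃ a : ℚ, x = (a : K)) →
      ∀ n : ℕ, ∃ a : ℚ, coeff n (Phi4 i Y Z S χ d e k l) = (a : K)) := by
  have hi4 : i ^ 4 = 1 := by rw [show 4 = 2 * 2 from rfl, pow_mul, hi, neg_one_sq]
  have hτi3 : τ i = i ^ 3 := by rw [hτi, pow_succ, hi, neg_one_mul]
  have hσ := map_Phi4_eq_self (σ : K →+* K) hi4 (hσi.trans (pow_one i).symm)
    isAdmissibleInvolution_sigmaPerm
    (forall_mem_powerset_apply_eq_sigmaPerm _ (fun J ↦ (Y J : PowerSeries K))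
      hYσ₁ hYσ₂ hYσ₃ hYσ₄ hYσ₅ hYσ₆ hYσ₇ hYσ₈)
    (forall_mem_powerset_apply_eq_sigmaPerm _ (fun J ↦ (Z J : PowerSeries K))
      hZσ₁ hZσ₂ hZσ₃ hZσ₄ hZσ₅ hZσ₆ hZσ₇ hZσ₈)
    (forall_mem_powerset_apply_eq_sigmaPerm _ S hSσ₁ hSσ₂ hSσ₃ hSσ₄ hSσ₅ hSσ₆ hSσ₇ hSσ₈)
    χ d e k l
  have hτ := map_Phi4_eq_self (τ : K →+* K) hi4 hτi3 isAdmissibleInvolution_tauPerm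
    (forall_mem_powerset_apply_eq_tauPerm _ (fun J ↦ (Y J : PowerSeries K))
      hYτ₁ hYτ₂ hYτ₃ hYτ₄ hYτ₅ hYτ₆ hYτ₇ hYτ₈)
    (forall_mem_powerset_apply_eq_tauPerm _ (fun J ↦ (Z J : PowerSeries K))
      hZτ₁ hZτ₂ hZτ₃ hZτ₄ hZτ₅ hZτ₆ hZτ₇ hZτ₈)
    (forall_mem_powerset_apply_eq_tauPerm _ S hSτ₁ hSτ₂ hSτ₃ hSτ₄ hSτ₅ hSτ₆ hSτ₇ hSτ₈)
    χ d e k l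
  exact ⟨hσ, hτ, fun hfix ↦ exists_ratCast_coeff_of_map_eq_self hfix hσ hτ⟩

/-- Rank-4 Galois invariance: if `σ`, `τ` act on the universal series `Y_J`, `Z_J`, `S_J`
by the conjectured permutations, then `Φ₀` is fixed by `σ` and `τ`; in particular when
the fixed field of `{σ,τ}` is `ℚ`, all coefficients of `Φ₀` are rational. -/
theorem rank_four_galois_invariance {K : Type*} [Field K] [CharZero K]
    (σ τ : K ≃+* K) (ω i : K)
    (hω : ω ^ 2 = 2) (hi : i ^ 2 = -1)
    (hσω : σ ω = -ω) (hσi : σ i = i) (hτω : τ ω = ω) (hτi : τ i = -i)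
    (Y Z : Finset ℕ → (PowerSeries K)ˣ) (S : Finset ℕ → PowerSeries K)
    (hS0 : ∀ J ∈ ({1, 2, 3} : Finset ℕ).powerset, constantCoeff (S J) = 0)
    (hYσ₁ : map (σ : K →+* K) (Y ∅ : PowerSeries K) = Y {1, 3})
    (hYσ₂ : map (σ : K →+* K) (Y {1, 3} : PowerSeries K) = Y ∅)
    (hYσ₃ : map (σ : K →+* K) (Y {2} : PowerSeries K) = Y {1, 2, 3})
    (hYσ₄ : map (σ : K →+* K) (Y {1, 2, 3} : PowerSeries K) = Y {2})
    (hYσ₅ : map (σ : K →+* K) (Y {1} : PowerSeries K) = Y {1})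
    (hYσ₆ : map (σ : K →+* K) (Y {3} : PowerSeries K) = Y {3})
    (hYσ₇ : map (σ : K →+* K) (Y {1, 2} : PowerSeries K) = Y {1, 2})
    (hYσ₈ : map (σ : K →+* K) (Y {2, 3} : PowerSeries K) = Y {2, 3})
    (hYτ₁ : map (τ : K →+* K) (Y {1} : PowerSeries K) = Y {3})
    (hYτ₂ : map (τ : K →+* K) (Y {3} : PowerSeries K) = Y {1})
    (hYτ₃ : map (τ : K →+* K) (Y {1, 2} : PowerSeries K) = Y {2, 3})
    (hYτ₄ : map (τ : K →+* K) (Y {2, 3} : PowerSeries K) = Y {1, 2})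
    (hYτ₅ : map (τ : K →+* K) (Y ∅ : PowerSeries K) = Y ∅)
    (hYτ₆ : map (τ : K →+* K) (Y {2} : PowerSeries K) = Y {2})
    (hYτ₇ : map (τ : K →+* K) (Y {1, 3} : PowerSeries K) = Y {1, 3})
    (hYτ₈ : map (τ : K →+* K) (Y {1, 2, 3} : PowerSeries K) = Y {1, 2, 3})
    (hZσ₁ : map (σ : K →+* K) (Z ∅ : PowerSeries K) = Z {1, 3})
    (hZσ₂ : map (σ : K →+* K) (Z {1, 3} : PowerSeries K) = Z ∅)
    (hZσ₃ : map (σ : K →+* K) (Z {2} : PowerSeries K) = Z {1, 2, 3})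
    (hZσ₄ : map (σ : K →+* K) (Z {1, 2, 3} : PowerSeries K) = Z {2})
    (hZσ₅ : map (σ : K →+* K) (Z {1} : PowerSeries K) = Z {1})
    (hZσ₆ : map (σ : K →+* K) (Z {3} : PowerSeries K) = Z {3})
    (hZσ₇ : map (σ : K →+* K) (Z {1, 2} : PowerSeries K) = Z {1, 2})
    (hZσ₈ : map (σ : K →+* K) (Z {2, 3} : PowerSeries K) = Z {2, 3})
    (hZτ₁ : map (τ : K →+* K) (Z {1} : PowerSeries K) = Z {3})
    (hZτ₂ : map (τ : K →+* K) (Z {3} : PowerSeries K) = Z {1})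
    (hZτ₃ : map (τ : K →+* K) (Z {1, 2} : PowerSeries K) = Z {2, 3})
    (hZτ₄ : map (τ : K →+* K) (Z {2, 3} : PowerSeries K) = Z {1, 2})
    (hZτ₅ : map (τ : K →+* K) (Z ∅ : PowerSeries K) = Z ∅)
    (hZτ₆ : map (τ : K →+* K) (Z {2} : PowerSeries K) = Z {2})
    (hZτ₇ : map (τ : K →+* K) (Z {1, 3} : PowerSeries K) = Z {1, 3})
    (hZτ₈ : map (τ : K →+* K) (Z {1, 2, 3} : PowerSeries K) = Z {1, 2, 3})
    (hSσ₁ : map (σ : K →+* K) (S ∅) = S {1, 3})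
    (hSσ₂ : map (σ : K →+* K) (S {1, 3}) = S ∅)
    (hSσ₃ : map (σ : K →+* K) (S {2}) = S {1, 2, 3})
    (hSσ₄ : map (σ : K →+* K) (S {1, 2, 3}) = S {2})
    (hSσ₅ : map (σ : K →+* K) (S {1}) = S {1})
    (hSσ₆ : map (σ : K →+* K) (S {3}) = S {3})
    (hSσ₇ : map (σ : K →+* K) (S {1, 2}) = S {1, 2})
    (hSσ₈ : map (σ : K →+* K) (S {2, 3}) = S {2, 3})
    (hSτ₁ : map (τ : K →+* K) (S {1}) = S {3})
    (hSτ₂ : map (τ : K →+* K) (S {3}) = S {1})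
    (hSτ₃ : map (τ : K →+* K) (S {1, 2}) = S {2, 3})
    (hSτ₄ : map (τ : K →+* K) (S {2, 3}) = S {1, 2})
    (hSτ₅ : map (τ : K →+* K) (S ∅) = S ∅)
    (hSτ₆ : map (τ : K →+* K) (S {2}) = S {2})
    (hSτ₇ : map (τ : K →+* K) (S {1, 3}) = S {1, 3})
    (hSτ₈ : map (τ : K →+* K) (S {1, 2, 3}) = S {1, 2, 3})
    (χ d e k l : ℤ) :
    map (σ : K →+* K) (Phi4 i Y Z S χ d e k l) = Phi4 i Y Z S χ d e k l ∧
    map (τ : K →+* K) (Phi4 i Y Z S χ d e k l) = Phi4 i Y Z S χ d e k l ∧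
    ((∀ x : K, σ x = x → τ x = x → ∃ a : ℚ, x = (a : K)) →
      ∀ n : ℕ, ∃ a : ℚ, coeff n (Phi4 i Y Z S χ d e k l) = (a : K)) :=
  rank_four_galois_invariance_general σ τ i hi hσi hτi Y Z S hYσ₁ hYσ₂ hYσ₃ hYσ₄ hYσ₅ hYσ₆ hYσ₇ hYσ₈
    hYτ₁ hYτ₂ hYτ₃ hYτ₄ hYτ₅ hYτ₆ hYτ₇ hYτ₈ hZσ₁ hZσ₂ hZσ₃ hZσ₄ hZσ₅ hZσ₆ hZσ₇ hZσ₈ hZτ₁ hZτ₂ hZτ₃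
    hZτ₄ hZτ₅ hZτ₆ hZτ₇ hZτ₈ hSσ₁ hSσ₂ hSσ₃ hSσ₄ hSσ₅ hSσ₆ hSσ₇ hSσ₈ hSτ₁ hSτ₂ hSτ₃ hSτ₄ hSτ₅ hSτ₆
    hSτ₇ hSτ₈ χ d e k l
end

section
/- Fix a positive integer ρ. For each integer r, in ℚ[[v]] let u be the unique power series with constant term 1 satisfying u^{ρ²} = (1+v)^{r²−ρ²}, let h be the unique power series with constant term 1 satisfying h^{ρ²} = (1+v)^{r²}, and set w_r(v) = v·u (which has zero constant term and linear coefficient 1). Let G_r, F_r ∈ ℚ[[w]] be the unique power series with G_r(w_r(v)) = 1+v and F_r(w_r(v)) = h·(1+(r²/ρ²)v)^{−1} in ℚ[[v]]. Then for every integer n ≥ 0 there exist polynomials p_n, q_n ∈ ℚ[X] of degree at most 2n such that for every integer r, the coefficient of w^n in G_r equals p_n(r) and the coefficient of w^n in F_r equals q_n(r). -/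
open PowerSeries

/-
The series `u_r`, `h_r` are the binomial series `(1 + v) ^ ((r² - ρ²) / ρ²)` and
`(1 + v) ^ (r² / ρ²)`, by uniqueness of `ρ²`-th roots with constant term `1`; since
`Ring.choose a k` is a polynomial of degree `k` in `a`, their `k`-th coefficients are polynomials
of degree `≤ 2k` in `r`. Families with this property form a subring, and it is closed under
inversion and under solving `A(v · u_r) = B` for `A`: in both cases the `k`-th coefficient of the
solution is given by a triangular recursion in which its `j`-th coefficient (`j < k`) is multiplied
by a `(k - j)`-th coefficient of a family in the subring.
-/

open Finset

-- The cofactor of `A - B` in `A ^ m - B ^ m` has constant term `m ≠ 0`.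
theorem PowerSeries.eq_of_pow_eq_pow_of_constantCoeff_eq_one {R : Type*} [CommRing R]
    [IsDomain R] [CharZero R] {A B : R⟦X⟧} {m : ℕ} (hm : m ≠ 0)
    (hA : constantCoeff A = 1) (hB : constantCoeff B = 1) (h : A ^ m = B ^ m) : A = B := by
  have hsum : (∑ i ∈ range m, A ^ i * B ^ (m - 1 - i)) * (A - B) = 0 := by
    rw [geom_sum₂_mul, h, sub_self]
  have hsum0 : constantCoeff (∑ i ∈ range m, A ^ i * B ^ (m - 1 - i)) ≠ 0 := by
    simp [hA, hB, hm]
  exact sub_eq_zero.mp ((mul_eq_zero.mp hsum).resolve_left fun h0 => hsum0 (by rw [h0, map_zero]))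

theorem PowerSeries.binomialSeries_pow {R A : Type*} [CommRing R] [BinomialRing R] [Ring A]
    [Algebra R A] (r : R) (n : ℕ) : binomialSeries A r ^ n = binomialSeries A (n • r) := by
  induction n with
  | zero => simp
  | succ n ih => rw [pow_succ, ih, succ_nsmul, binomialSeries_add]

theorem zp_one_add_X_eq_binomialSeries (n : ℤ) :
    zp (1 + X) n = PowerSeries.binomialSeries ℚ (n : ℚ) := by
  cases n with
  | ofNat m => simp [zp]
  | negSucc m =>
    have hX : (1 + X : ℚ⟦X⟧) ^ (m + 1) ≠ 0 := pow_ne_zero _ fun h => by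
      simpa using congrArg constantCoeff h
    refine mul_right_cancel₀ hX ?_
    have hbin : PowerSeries.binomialSeries ℚ ((Int.negSucc m : ℤ) : ℚ) * (1 + X) ^ (m + 1) = 1 := by
      rw [← binomialSeries_nat (R := ℚ), ← binomialSeries_add]
      simp [Int.negSucc_eq]
    have htoNat : (-Int.negSucc m).toNat = m + 1 := rfl
    rw [hbin, zp, htoNat, Int.toNat_negSucc, pow_zero, one_mul, ← mul_pow,
      PowerSeries.inv_mul_cancel _ (by simp), one_pow]

theorem eq_binomialSeries_of_pow_eq_zp {m : ℕ} (hm : m ≠ 0) {A : ℚ⟦X⟧}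
    (hA0 : constantCoeff A = 1) {n : ℤ} (hA : A ^ m = zp (1 + X) n) :
    A = PowerSeries.binomialSeries ℚ ((n : ℚ) / m) := by
  refine eq_of_pow_eq_pow_of_constantCoeff_eq_one hm hA0 (binomialSeries_constantCoeff _) ?_
  rw [hA, zp_one_add_X_eq_binomialSeries, binomialSeries_pow, nsmul_eq_mul,
    mul_div_cancel₀ _ (by exact_mod_cast hm)]

theorem coeff_comp_X_mul (f g : ℚ⟦X⟧) (n : ℕ) :
    coeff n (comp f (X * g)) = ∑ k ∈ range (n + 1), coeff k f * coeff (n - k) (g ^ k) := by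
  rw [comp, coeff_mk]
  refine sum_congr rfl fun k hk => ?_
  rw [mul_pow, coeff_X_pow_mul', if_pos (Nat.lt_succ_iff.mp (mem_range.mp hk))]

def polyFunctionsDegreeLE (n : ℕ) : Submodule ℚ (ℤ → ℚ) where
  carrier := {c | ∃ p : Polynomial ℚ, p.natDegree ≤ n ∧ c = fun r : ℤ => p.eval (r : ℚ)}
  add_mem' := by
    rintro _ _ ⟨p, hp, rfl⟩ ⟨q, hq, rfl⟩
    exact ⟨p + q, (Polynomial.natDegree_add_le _ _).trans (max_le hp hq), by ext; simp⟩
  zero_mem' := ⟨0, by simp, by ext; simp⟩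
  smul_mem' := by
    rintro a _ ⟨p, hp, rfl⟩
    exact ⟨Polynomial.C a * p, Polynomial.natDegree_C_mul_le _ _ |>.trans hp, by ext; simp⟩

theorem const_mem_polyFunctionsDegreeLE (a : ℚ) (n : ℕ) :
    (fun _ => a) ∈ polyFunctionsDegreeLE n :=
  ⟨Polynomial.C a, by simp, by ext; simp⟩

theorem mul_mem_polyFunctionsDegreeLE {m n : ℕ} {f g : ℤ → ℚ}
    (hf : f ∈ polyFunctionsDegreeLE m) (hg : g ∈ polyFunctionsDegreeLE n) :
    f * g ∈ polyFunctionsDegreeLE (m + n) := by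
  obtain ⟨p, hp, rfl⟩ := hf
  obtain ⟨q, hq, rfl⟩ := hg
  exact ⟨p * q, Polynomial.natDegree_mul_le.trans (add_le_add hp hq), by ext; simp⟩

theorem quadratic_mem_polyFunctionsDegreeLE (a b : ℚ) :
    (fun r : ℤ => (r : ℚ) ^ 2 / a + b) ∈ polyFunctionsDegreeLE 2 :=
  ⟨Polynomial.C a⁻¹ * Polynomial.X ^ 2 + Polynomial.C b, by compute_degree,
    by ext; simp [div_eq_inv_mul]⟩

theorem choose_mem_polyFunctionsDegreeLE {d : ℕ} {c : ℤ → ℚ}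
    (hc : c ∈ polyFunctionsDegreeLE d) (k : ℕ) :
    (fun r => Ring.choose (c r) k) ∈ polyFunctionsDegreeLE (d * k) := by
  obtain ⟨p, hp, rfl⟩ := hc
  refine ⟨Polynomial.C (k.factorial : ℚ)⁻¹ * (descPochhammer ℚ k).comp p, ?_, ?_⟩
  · refine (Polynomial.natDegree_C_mul_le _ _).trans ?_
    rw [Polynomial.natDegree_comp, descPochhammer_natDegree, mul_comm]
    exact Nat.mul_le_mul_right k hp
  · ext r
    simp only [Ring.choose_eq_smul, smul_eq_mul, Polynomial.eval_mul, Polynomial.eval_C,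
      Polynomial.eval_comp, Polynomial.descPochhammer_smeval_eq_ascPochhammer,
      Polynomial.ascPochhammer_smeval_cast, Polynomial.ascPochhammer_smeval_eq_eval,
      descPochhammer_eval_eq_ascPochhammer]

def polyCoeffFamilies (d : ℕ) : Subring (ℤ → ℚ⟦X⟧) where
  carrier := {A | ∀ k, (fun r => coeff k (A r)) ∈ polyFunctionsDegreeLE (d * k)}
  mul_mem' {A B} hA hB k := by
    have hcoeff : (fun r => coeff k ((A * B) r)) =
        ∑ ij ∈ antidiagonal k, (fun r => coeff ij.1 (A r)) * fun r => coeff ij.2 (B r) := by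
      ext r; simp [coeff_mul]
    rw [hcoeff]
    refine Submodule.sum_mem _ fun ij hij => ?_
    rw [← mem_antidiagonal.mp hij, mul_add]
    exact mul_mem_polyFunctionsDegreeLE (hA _) (hB _)
  one_mem' k := by simpa using const_mem_polyFunctionsDegreeLE (coeff k 1) (d * k)
  add_mem' {A B} hA hB k := by
    convert add_mem (hA k) (hB k) using 1
    ext; simp
  zero_mem' k := by simpa using const_mem_polyFunctionsDegreeLE 0 (d * k)
  neg_mem' {A} hA k := by
    convert neg_mem (hA k) using 1
    ext; simp

theorem const_mem_polyCoeffFamilies (f : ℚ⟦X⟧) (d : ℕ) : (fun _ => f) ∈ polyCoeffFamilies d :=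
  fun k => const_mem_polyFunctionsDegreeLE (coeff k f) (d * k)

theorem binomialSeries_mem_polyCoeffFamilies {d : ℕ} {c : ℤ → ℚ}
    (hc : c ∈ polyFunctionsDegreeLE d) :
    (fun r => PowerSeries.binomialSeries ℚ (c r)) ∈ polyCoeffFamilies d := fun k => by
  simpa using choose_mem_polyFunctionsDegreeLE hc k

theorem one_add_C_mul_X_mem_polyCoeffFamilies {d : ℕ} {c : ℤ → ℚ}
    (hc : c ∈ polyFunctionsDegreeLE d) :
    (fun r => 1 + C (c r) * X) ∈ polyCoeffFamilies d := by
  refine add_mem (one_mem _) fun k => ?_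
  rcases eq_or_ne k 1 with rfl | hk
  · simpa using hc
  · convert zero_mem (polyFunctionsDegreeLE (d * k)) using 1
    ext; simp [coeff_X, hk]

theorem mem_polyCoeffFamilies_of_coeff_eq {d : ℕ} {A B : ℤ → ℚ⟦X⟧} {E : ℕ → ℤ → ℚ⟦X⟧}
    (a : ℕ → ℕ → ℚ) (hB : B ∈ polyCoeffFamilies d) (hE : ∀ j, E j ∈ polyCoeffFamilies d)
    (hA : ∀ k r, coeff k (A r) =
      coeff k (B r) + ∑ j ∈ range k, a k j * (coeff j (A r) * coeff (k - j) (E j r))) :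
    A ∈ polyCoeffFamilies d := by
  intro k
  induction k using Nat.strong_induction_on with
  | _ k ih =>
  have hcoeff : (fun r => coeff k (A r)) = (fun r => coeff k (B r)) +
      ∑ j ∈ range k, a k j • ((fun r => coeff j (A r)) * fun r => coeff (k - j) (E j r)) := by
    ext r; simp [hA k r]
  rw [hcoeff]
  refine add_mem (hB k) (Submodule.sum_mem _ fun j hj => Submodule.smul_mem _ _ ?_)
  have hjk : d * j + d * (k - j) = d * k := by
    rw [← mul_add, Nat.add_sub_cancel' (mem_range.mp hj).le]
  exact hjk ▸ mul_mem_polyFunctionsDegreeLE (ih j (mem_range.mp hj)) (hE j (k - j))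

theorem inv_mem_polyCoeffFamilies {d : ℕ} {B : ℤ → ℚ⟦X⟧}
    (hB0 : ∀ r, constantCoeff (B r) = 1) (hB : B ∈ polyCoeffFamilies d) :
    (fun r => (B r)⁻¹) ∈ polyCoeffFamilies d := by
  refine mem_polyCoeffFamilies_of_coeff_eq (B := 1) (E := fun _ => B) (fun _ _ => -1)
    (one_mem _) (fun _ => hB) fun k r => ?_
  have hinv := congrArg (coeff k) (PowerSeries.inv_mul_cancel (B r) (by simp [hB0 r]))
  rw [coeff_mul, Finset.Nat.sum_antidiagonal_eq_sum_range_succ_mk, sum_range_succ,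
    Nat.sub_self, coeff_zero_eq_constantCoeff, hB0 r, mul_one] at hinv
  simp only [Pi.one_apply, neg_one_mul, sum_neg_distrib]
  linarith

theorem mem_polyCoeffFamilies_of_comp_X_mul_eq {d : ℕ} {A u B : ℤ → ℚ⟦X⟧}
    (hu0 : ∀ r, constantCoeff (u r) = 1) (hu : u ∈ polyCoeffFamilies d)
    (hB : B ∈ polyCoeffFamilies d) (hA : ∀ r, comp (A r) (X * u r) = B r) :
    A ∈ polyCoeffFamilies d := by
  refine mem_polyCoeffFamilies_of_coeff_eq (E := fun j => u ^ j) (fun _ _ => -1)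
    hB (fun j => pow_mem hu j) fun k r => ?_
  have hcomp := hA r ▸ coeff_comp_X_mul (A r) (u r) k
  rw [sum_range_succ, Nat.sub_self, coeff_zero_eq_constantCoeff, map_pow, hu0 r, one_pow,
    mul_one] at hcomp
  simp only [Pi.pow_apply, neg_one_mul, sum_neg_distrib]
  linarith

/-- Polynomiality in `r` of the coefficients of the rank-ρ universal Verlinde series
`G_r = g_{r/ρ}` and `F_r = f_{r/ρ}`, defined by `G_r(w_r(v)) = 1+v` and
`F_r(w_r(v)) = h·(1+(r²/ρ²)v)⁻¹` where `w_r(v) = v·u`, `u^{ρ²} = (1+v)^{r²-ρ²}`,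
`h^{ρ²} = (1+v)^{r²}`, `u(0) = h(0) = 1`: the coefficients of `w^n` in `G_r` and `F_r`
are polynomials in `r` of degree at most `2n`. -/
theorem coeff_G_F_polynomial_in_r (ρ : ℕ) (hρ : 0 < ρ)
    (u h G F : ℤ → ℚ⟦X⟧)
    (hu0 : ∀ r : ℤ, constantCoeff (u r) = 1)
    (hu : ∀ r : ℤ, (u r) ^ (ρ ^ 2) = zp (1 + X) (r ^ 2 - (ρ : ℤ) ^ 2))
    (hh0 : ∀ r : ℤ, constantCoeff (h r) = 1)
    (hh : ∀ r : ℤ, (h r) ^ (ρ ^ 2) = zp (1 + X) (r ^ 2))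
    (hG : ∀ r : ℤ, comp (G r) (X * u r) = 1 + X)
    (hF : ∀ r : ℤ, comp (F r) (X * u r) =
      h r * (1 + C ((r : ℚ) ^ 2 / (ρ : ℚ) ^ 2) * X)⁻¹) :
    ∀ n : ℕ, ∃ p q : Polynomial ℚ,
      p.natDegree ≤ 2 * n ∧ q.natDegree ≤ 2 * n ∧
      ∀ r : ℤ, coeff n (G r) = p.eval (r : ℚ) ∧ coeff n (F r) = q.eval (r : ℚ) := by
  have hρ2 : ρ ^ 2 ≠ 0 := by positivity
  have hquad := quadratic_mem_polyFunctionsDegreeLE ((ρ : ℚ) ^ 2)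
  have hu_mem : u ∈ polyCoeffFamilies 2 := by
    convert binomialSeries_mem_polyCoeffFamilies (hquad (-1)) with r
    rw [eq_binomialSeries_of_pow_eq_zp hρ2 (hu0 r) (hu r)]
    congr 1; push_cast; field_simp; ring
  have hh_mem : h ∈ polyCoeffFamilies 2 := by
    convert binomialSeries_mem_polyCoeffFamilies (hquad 0) with r
    rw [eq_binomialSeries_of_pow_eq_zp hρ2 (hh0 r) (hh r)]
    congr 1; push_cast; ring
  have hG_mem := mem_polyCoeffFamilies_of_comp_X_mul_eq hu0 hu_mem
    (const_mem_polyCoeffFamilies _ _) hG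
  have hF_mem := mem_polyCoeffFamilies_of_comp_X_mul_eq hu0 hu_mem
    (mul_mem hh_mem (inv_mem_polyCoeffFamilies (fun r => by simp)
      (one_add_C_mul_X_mem_polyCoeffFamilies (by simpa using hquad 0)))) hF
  intro n
  obtain ⟨p, hp, hpG⟩ := hG_mem n
  obtain ⟨q, hq, hqF⟩ := hF_mem n
  exact ⟨p, q, hp, hq, fun r => ⟨congrFun hpG r, congrFun hqF r⟩⟩
end
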